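/- Let n ≥ 0 and 0 ≤ i ≤ n be natural numbers, and define the polynomial P_{n,i}(x) := ((2i)!!/(2i−1)!!) · 4^{−n} · C(n,i)^{−1} · Σ_{j=0}^{n−i} 4^j · C(i+j,i) · C(2i+2j,i+j) · C(2n−2i−2j,n−i−j) · (x−1/2)^{2j}. Then P_{n,i}(0) = 1 and, for every real x ∉ {0, 1/2, 1}, P_{n,i} satisfies the Heun differential equation P″(x) + ( (i+1)/x + (i+1)/(x−1) + (2i−2n)/(x−1/2) ) · P′(x) + ( 2(i−n)(2i+1)·x − (i−n)(2i+1) ) / ( x(x−1)(x−1/2) ) · P(x) = 0. -/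

import Mathlib

/-!
With `t = x - 1/2` one has `x (x - 1) = t² - 1/4`, and multiplying the Heun equation by
`t² x (x - 1)` turns it into an Euler-type equation in `t`. On an even monomial `t^(2j)` this
operator produces only `t^(2j)` and `t^(2j+2)`, so the equation amounts to a two-term recurrence
for the coefficients `A_j = 4^j C(i+j,i) C(2i+2j,i+j) C(2(n-i-j),n-i-j)`. The recurrence follows
from `(k+1) C(2k+2,k+1) = 2(2k+1) C(2k,k)`, and the sum terminates because the factor `j + i - n`
vanishes at `j = n - i`.

At `x = 0` we have `t^(2j) = 4^(-j)`, so `P(0) = 1` reduces to the convolution identity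
`∑_j C(i+j,i) C(2i+2j,i+j) C(2m-2j,m-j) = 4^m C(2i,i) C(i+m,i)` (the product of the generating
functions `C(2i,i) (1-4y)^(-i-1/2)` and `(1-4y)^(-1/2)`). It holds because both sides satisfy the
same first-order recurrence in `m`; combined with `(2i)‼ C(2i,i) = (2i-1)‼ 4^i` it gives
`P(0) = 1`.
-/

/-- The polynomial `P_{n,i}` from (3.14): the polynomial form of the Heun function
`Hl(1/2, (i−n)(2i+1); 2(i−n), 2i+1; i+1, i+1; x)`. -/
noncomputable def heunPoly (n i : ℕ) (x : ℝ) : ℝ :=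
  ((Nat.doubleFactorial (2 * i) : ℝ) / (Nat.doubleFactorial (2 * i - 1) : ℝ)) *
    ((4 : ℝ) ^ n)⁻¹ * ((n.choose i : ℝ))⁻¹ *
    ∑ j ∈ Finset.range (n - i + 1),
      4 ^ j * ((i + j).choose i : ℝ) * ((2 * i + 2 * j).choose (i + j) : ℝ) *
        ((2 * n - 2 * i - 2 * j).choose (n - i - j) : ℝ) * (x - 1 / 2) ^ (2 * j)

open Finset Nat

theorem Finset.sum_range_mul_pow_succ_eq_of_shift {R : Type*} [CommSemiring R] {N : ℕ}
    {c d : ℕ → R} (hc : c N = 0) (hd : d 0 = 0) (h : ∀ j < N, c j = d (j + 1)) (u : R) :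
    ∑ j ∈ range (N + 1), c j * u ^ (j + 1) = ∑ j ∈ range (N + 1), d j * u ^ j := by
  rw [sum_range_succ, hc, sum_range_succ', hd]
  simp only [zero_mul, add_zero]
  exact sum_congr rfl fun j hj => by rw [h j (mem_range.mp hj)]

theorem hasDerivAt_sum_mul_sub_pow {𝕜 : Type*} [NontriviallyNormedField 𝕜] (s : Finset ℕ)
    (a : ℕ → 𝕜) (e : ℕ → ℕ) (c x : 𝕜) :
    HasDerivAt (fun x => ∑ j ∈ s, a j * (x - c) ^ e j)
      (∑ j ∈ s, a j * e j * (x - c) ^ (e j - 1)) x := by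
  have h := HasDerivAt.fun_sum fun j (_ : j ∈ s) =>
    (((hasDerivAt_id x).sub_const c).fun_pow (e j)).const_mul (a j)
  simpa only [id, mul_one, mul_assoc] using h

-- At `e = 0` the truncated exponent `e - 1 = 0` is harmless: the factor `e` kills the term.
theorem mul_cast_mul_pow_sub_one {R : Type*} [CommSemiring R] (e : ℕ) (t : R) :
    t * (e * t ^ (e - 1)) = e * t ^ e := by
  cases e with
  | zero => simp
  | succ e => rw [Nat.add_sub_cancel, pow_succ]; ring

-- The Cauchy product of the coefficient sequences of `(1 - r y)^(-p/r)` and `(1 - r y)^(-q/r)`.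
theorem Finset.Nat.succ_mul_sum_antidiagonal_succ {R : Type*} [CommSemiring R]
    {a b : ℕ → R} {r p q : R}
    (ha : ∀ j : ℕ, ((j : R) + 1) * a (j + 1) = (r * j + p) * a j)
    (hb : ∀ k : ℕ, ((k : R) + 1) * b (k + 1) = (r * k + q) * b k) (m : ℕ) :
    ((m : R) + 1) * ∑ x ∈ antidiagonal (m + 1), a x.1 * b x.2 =
      (r * m + p + q) * ∑ x ∈ antidiagonal m, a x.1 * b x.2 := by
  have hsplit : ((m : R) + 1) * ∑ x ∈ antidiagonal (m + 1), a x.1 * b x.2 =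
      ∑ x ∈ antidiagonal (m + 1), ((x.1 : R) * a x.1) * b x.2 +
        ∑ x ∈ antidiagonal (m + 1), a x.1 * ((x.2 : R) * b x.2) := by
    rw [mul_sum, ← sum_add_distrib]
    refine sum_congr rfl fun x hx => ?_
    rw [← Nat.cast_one, ← Nat.cast_add, ← mem_antidiagonal.mp hx]
    push_cast
    ring
  rw [hsplit, sum_antidiagonal_succ, sum_antidiagonal_succ', mul_sum]
  simp only [Nat.cast_zero, Nat.cast_add, Nat.cast_one, zero_mul, zero_add, mul_zero, ha, hb,
    ← sum_add_distrib]
  refine sum_congr rfl fun x hx => ?_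
  rw [← mem_antidiagonal.mp hx]
  push_cast
  ring

theorem Nat.succ_mul_choose_mul_centralBinom (i j : ℕ) :
    (j + 1) * ((i + (j + 1)).choose i * centralBinom (i + (j + 1))) =
      (4 * j + (4 * i + 2)) * ((i + j).choose i * centralBinom (i + j)) := by
  have hchoose : (j + 1) * (i + j + 1).choose i = (i + j + 1) * (i + j).choose i := by
    have := Nat.choose_mul_succ_eq (i + j) i
    rw [show i + j + 1 - i = j + 1 by omega] at this
    linarith
  have hcb := Nat.succ_mul_centralBinom_succ (i + j)
  rw [← add_assoc]
  calc (j + 1) * ((i + j + 1).choose i * centralBinom (i + j + 1))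
      = (i + j).choose i * ((i + j + 1) * centralBinom (i + j + 1)) := by
        rw [← mul_assoc, hchoose]; ring
    _ = _ := by rw [hcb]; ring

theorem Nat.sum_antidiagonal_choose_mul_centralBinom_mul_centralBinom (i m : ℕ) :
    ∑ x ∈ antidiagonal m, (i + x.1).choose i * centralBinom (i + x.1) * centralBinom x.2 =
      4 ^ m * centralBinom i * (i + m).choose i := by
  induction m with
  | zero => simp
  | succ m ih =>
    have hrec := Finset.Nat.succ_mul_sum_antidiagonal_succ (R := ℕ)
      (a := fun j => (i + j).choose i * centralBinom (i + j)) (b := centralBinom)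
      (r := 4) (p := 4 * i + 2) (q := 2)
      (fun j => by simpa using succ_mul_choose_mul_centralBinom i j)
      (fun k => by simp only [Nat.cast_id]; rw [succ_mul_centralBinom_succ]; ring) m
    have hchoose := Nat.choose_mul_succ_eq (i + m) i
    rw [show i + m + 1 - i = m + 1 by omega] at hchoose
    apply Nat.eq_of_mul_eq_mul_left (show 0 < m + 1 by omega)
    simp only [Nat.cast_id] at hrec
    rw [hrec, ih, ← add_assoc i m 1]
    calc (4 * m + (4 * i + 2) + 2) * (4 ^ m * centralBinom i * (i + m).choose i)
        = 4 ^ (m + 1) * centralBinom i * ((i + m).choose i * (i + m + 1)) := by ring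
      _ = _ := by rw [hchoose]; ring

theorem Nat.doubleFactorial_two_mul_mul_centralBinom (i : ℕ) :
    (2 * i)‼ * centralBinom i = (2 * i - 1)‼ * 4 ^ i := by
  induction i with
  | zero => rfl
  | succ i ih =>
    have hodd : (2 * (i + 1) - 1)‼ = (2 * i + 1) * (2 * i - 1)‼ := by
      rw [show 2 * (i + 1) - 1 = 2 * i + 1 by omega, doubleFactorial_add_one]
    rw [hodd, show 2 * (i + 1) = 2 * i + 2 by ring, doubleFactorial_add_two]
    calc (2 * i + 2) * (2 * i)‼ * centralBinom (i + 1)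
        = 2 * (2 * i)‼ * ((i + 1) * centralBinom (i + 1)) := by ring
      _ = 4 * (2 * i + 1) * ((2 * i)‼ * centralBinom i) := by
        rw [succ_mul_centralBinom_succ]; ring
      _ = _ := by rw [ih]; ring

noncomputable def heunCoeff (n i j : ℕ) : ℝ :=
  4 ^ j * ((i + j).choose i : ℝ) * ((2 * i + 2 * j).choose (i + j) : ℝ) *
    ((2 * n - 2 * i - 2 * j).choose (n - i - j) : ℝ)

noncomputable def heunConst (n i : ℕ) : ℝ :=
  ((Nat.doubleFactorial (2 * i) : ℝ) / (Nat.doubleFactorial (2 * i - 1) : ℝ)) *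
    ((4 : ℝ) ^ n)⁻¹ * ((n.choose i : ℝ))⁻¹

theorem heunPoly_eq_sum (n i : ℕ) : heunPoly n i =
    fun x => heunConst n i * ∑ j ∈ range (n - i + 1), heunCoeff n i j * (x - 1 / 2) ^ (2 * j) :=
  rfl

theorem heunCoeff_eq_centralBinom (n i j : ℕ) :
    heunCoeff n i j =
      4 ^ j * ((i + j).choose i * centralBinom (i + j) : ℕ) * centralBinom (n - i - j) := by
  rw [heunCoeff, show 2 * n - 2 * i - 2 * j = 2 * (n - i - j) by omega,
    show 2 * i + 2 * j = 2 * (i + j) by ring, ← centralBinom_eq_two_mul_choose,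
    ← centralBinom_eq_two_mul_choose]
  push_cast
  ring

theorem heunPoly_zero {n i : ℕ} (hi : i ≤ n) : heunPoly n i 0 = 1 := by
  have hsum : ∑ j ∈ range (n - i + 1), heunCoeff n i j * (0 - 1 / 2 : ℝ) ^ (2 * j) =
      (4 ^ (n - i) * centralBinom i * (i + (n - i)).choose i : ℕ) := by
    rw [← sum_antidiagonal_choose_mul_centralBinom_mul_centralBinom,
      Finset.Nat.sum_antidiagonal_eq_sum_range_succ_mk]
    push_cast
    refine sum_congr rfl fun j _ => ?_
    rw [heunCoeff_eq_centralBinom, pow_mul, show (0 - 1 / 2 : ℝ) ^ 2 = 4⁻¹ by norm_num,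
      inv_pow]
    push_cast
    field_simp
  have hdf : ((2 * i)‼ : ℝ) * centralBinom i = (2 * i - 1)‼ * 4 ^ i := by
    exact_mod_cast doubleFactorial_two_mul_mul_centralBinom i
  have h4 : (4 : ℝ) ^ n = 4 ^ (n - i) * 4 ^ i := by rw [← pow_add, Nat.sub_add_cancel hi]
  have hchoose : (n.choose i : ℝ) ≠ 0 := by exact_mod_cast (Nat.choose_pos hi).ne'
  have hodd : ((2 * i - 1)‼ : ℝ) ≠ 0 := by exact_mod_cast (doubleFactorial_pos _).ne'
  simp only [heunPoly_eq_sum]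
  rw [hsum, Nat.add_sub_cancel' hi, heunConst, h4]
  push_cast
  field_simp
  linear_combination hdf

theorem heunCoeff_succ {n i j : ℕ} (hj : j < n - i) :
    4 * heunCoeff n i j * ((j + i - n) * (2 * j + 2 * i + 1)) =
      heunCoeff n i (j + 1) * ((j + 1) * (2 * j + 2 * i - 2 * n + 1)) := by
  obtain ⟨k, hk⟩ : ∃ k, n - i - j = k + 1 := ⟨n - i - j - 1, by omega⟩
  have hn : (n : ℝ) = i + j + k + 1 := by exact_mod_cast (by omega : n = i + j + k + 1)
  have he : ((j : ℝ) + 1) * ((i + (j + 1)).choose i * centralBinom (i + (j + 1)) : ℕ) =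
      (4 * j + (4 * i + 2)) * ((i + j).choose i * centralBinom (i + j) : ℕ) := by
    exact_mod_cast succ_mul_choose_mul_centralBinom i j
  have hc : ((k : ℝ) + 1) * centralBinom (k + 1) = 2 * (2 * k + 1) * centralBinom k := by
    exact_mod_cast succ_mul_centralBinom_succ k
  rw [heunCoeff_eq_centralBinom, heunCoeff_eq_centralBinom, hk,
    show n - i - (j + 1) = k by omega, hn]
  linear_combination (4 ^ (j + 1) * (2 * k + 1) * (centralBinom k : ℝ)) * he -
    (4 ^ (j + 1) * (2 * j + 2 * i + 1) * ((i + j).choose i * centralBinom (i + j) : ℕ)) * hc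

theorem sum_heunCoeff_mul_euler {n i : ℕ} (hi : i ≤ n) (t : ℝ) :
    ∑ j ∈ range (n - i + 1), heunCoeff n i j *
      ((t ^ 2 - 1 / 4) * (2 * j * (2 * j - 1))
        + ((4 * i - 2 * n + 2) * t ^ 2 - (i - n) / 2) * (2 * j)
        + 2 * (i - n) * (2 * i + 1) * t ^ 2) * t ^ (2 * j) = 0 := by
  set c : ℕ → ℝ := fun j => 2 * heunCoeff n i j * ((j + i - n) * (2 * j + 2 * i + 1))
  set d : ℕ → ℝ := fun j => heunCoeff n i j * (j * (2 * j + 2 * i - 2 * n - 1)) / 2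
  have hc : c (n - i) = 0 := by simp [c, Nat.cast_sub hi]
  have hd : d 0 = 0 := by simp [d]
  have hcd : ∀ j < n - i, c j = d (j + 1) := fun j hj => by
    have := heunCoeff_succ hj
    simp only [c, d]
    push_cast
    linear_combination this / 2
  calc _ = ∑ j ∈ range (n - i + 1), c j * (t ^ 2) ^ (j + 1) -
        ∑ j ∈ range (n - i + 1), d j * (t ^ 2) ^ j := by
        rw [← sum_sub_distrib]
        exact sum_congr rfl fun j _ => by ring
    _ = 0 := sub_eq_zero.mpr (sum_range_mul_pow_succ_eq_of_shift hc hd hcd _)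

theorem deriv_heunPoly (n i : ℕ) : deriv (heunPoly n i) = fun x =>
    heunConst n i * ∑ j ∈ range (n - i + 1),
      heunCoeff n i j * (2 * j : ℕ) * (x - 1 / 2) ^ (2 * j - 1) :=
  funext fun x => by
    rw [heunPoly_eq_sum]
    exact ((hasDerivAt_sum_mul_sub_pow _ _ (2 * ·) _ x).const_mul _).deriv

theorem deriv_deriv_heunPoly (n i : ℕ) (x : ℝ) : deriv (deriv (heunPoly n i)) x =
    heunConst n i * ∑ j ∈ range (n - i + 1),
      heunCoeff n i j * (2 * j : ℕ) * (2 * j - 1 : ℕ) * (x - 1 / 2) ^ (2 * j - 1 - 1) := by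
  rw [deriv_heunPoly]
  exact ((hasDerivAt_sum_mul_sub_pow _ _ (2 * · - 1) _ x).const_mul _).deriv

theorem sub_half_mul_deriv_heunPoly (n i : ℕ) (x : ℝ) :
    (x - 1 / 2) * deriv (heunPoly n i) x =
      heunConst n i * ∑ j ∈ range (n - i + 1),
        heunCoeff n i j * (2 * j : ℕ) * (x - 1 / 2) ^ (2 * j) := by
  rw [deriv_heunPoly]
  refine (mul_left_comm _ _ _).trans (congrArg _ ?_)
  rw [mul_sum]
  refine sum_congr rfl fun j _ => ?_
  linear_combination heunCoeff n i j * mul_cast_mul_pow_sub_one (2 * j) (x - 1 / 2)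

theorem sub_half_sq_mul_deriv_deriv_heunPoly (n i : ℕ) (x : ℝ) :
    (x - 1 / 2) ^ 2 * deriv (deriv (heunPoly n i)) x =
      heunConst n i * ∑ j ∈ range (n - i + 1),
        heunCoeff n i j * (2 * j : ℕ) * (2 * j - 1 : ℕ) * (x - 1 / 2) ^ (2 * j) := by
  rw [deriv_deriv_heunPoly]
  refine (mul_left_comm _ _ _).trans (congrArg _ ?_)
  rw [mul_sum]
  refine sum_congr rfl fun j _ => ?_
  have h1 := mul_cast_mul_pow_sub_one (2 * j - 1) (x - 1 / 2)
  have h2 := mul_cast_mul_pow_sub_one (2 * j) (x - 1 / 2)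
  linear_combination (x - 1 / 2) * heunCoeff n i j * (2 * j : ℕ) * h1
    + heunCoeff n i j * ((2 * j - 1 : ℕ) : ℝ) * h2

theorem heunPoly_euler_form {n i : ℕ} (hi : i ≤ n) (x : ℝ) :
    ((x - 1 / 2) ^ 2 - 1 / 4) * ((x - 1 / 2) ^ 2 * deriv (deriv (heunPoly n i)) x)
      + ((4 * i - 2 * n + 2) * (x - 1 / 2) ^ 2 - (i - n) / 2)
        * ((x - 1 / 2) * deriv (heunPoly n i) x)
      + 2 * (i - n) * (2 * i + 1) * (x - 1 / 2) ^ 2 * heunPoly n i x = 0 := by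
  rw [sub_half_sq_mul_deriv_deriv_heunPoly, sub_half_mul_deriv_heunPoly, heunPoly_eq_sum,
    ← mul_zero (heunConst n i), ← sum_heunCoeff_mul_euler hi (x - 1 / 2)]
  simp only [mul_sum, ← sum_add_distrib]
  refine sum_congr rfl fun j _ => ?_
  have hcast : 2 * (j : ℝ) * (2 * j - 1 : ℕ) = 2 * j * (2 * j - 1) := by
    rcases j.eq_zero_or_pos with rfl | hj
    · simp
    · rw [Nat.cast_sub (by omega)]; push_cast; ring
  push_cast
  linear_combination
    ((x - 1 / 2) ^ 2 - 1 / 4) * heunConst n i * heunCoeff n i j * (x - 1 / 2) ^ (2 * j) * hcast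

theorem heun_ode_of_euler_form {i n x P P' P'' : ℝ} (hx0 : x ≠ 0) (hx1 : x ≠ 1)
    (hxh : x ≠ 1 / 2)
    (h : ((x - 1 / 2) ^ 2 - 1 / 4) * ((x - 1 / 2) ^ 2 * P'')
      + ((4 * i - 2 * n + 2) * (x - 1 / 2) ^ 2 - (i - n) / 2) * ((x - 1 / 2) * P')
      + 2 * (i - n) * (2 * i + 1) * (x - 1 / 2) ^ 2 * P = 0) :
    P'' + ((i + 1) / x + (i + 1) / (x - 1) + (2 * i - 2 * n) / (x - 1 / 2)) * P'
      + (2 * (i - n) * (2 * i + 1) * x - (i - n) * (2 * i + 1)) / (x * (x - 1) * (x - 1 / 2))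
        * P = 0 := by
  have hx1' : x - 1 ≠ 0 := sub_ne_zero.mpr hx1
  have hxh' : x - 1 / 2 ≠ 0 := sub_ne_zero.mpr hxh
  apply mul_left_cancel₀ (mul_ne_zero (mul_ne_zero hx0 hx1') (pow_ne_zero 2 hxh'))
  have h2x : x * 2 - 1 ≠ 0 := fun h => hxh' (by linarith)
  rw [mul_zero, ← h]
  field_simp
  ring

theorem stmt12 (n i : ℕ) (hi : i ≤ n) :
    heunPoly n i 0 = 1 ∧
      ∀ x : ℝ, x ∉ ({0, 1 / 2, 1} : Set ℝ) →
        deriv (deriv (heunPoly n i)) x +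
            (((i : ℝ) + 1) / x + ((i : ℝ) + 1) / (x - 1) +
                (2 * (i : ℝ) - 2 * (n : ℝ)) / (x - 1 / 2)) * deriv (heunPoly n i) x +
            (2 * ((i : ℝ) - (n : ℝ)) * (2 * (i : ℝ) + 1) * x -
                ((i : ℝ) - (n : ℝ)) * (2 * (i : ℝ) + 1)) /
              (x * (x - 1) * (x - 1 / 2)) * heunPoly n i x = 0 := by
  refine ⟨heunPoly_zero hi, fun x hx => ?_⟩
  simp only [Set.mem_insert_iff, Set.mem_singleton_iff, not_or] at hx
  exact heun_ode_of_euler_form hx.1 hx.2.2 hx.2.1 (heunPoly_euler_form hi x)
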